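/- Each of the following birational transformations maps solutions of the A5^(2) system to solutions: with the notation (*) = (x,y,z,w,t; α0,α1,α2,α3), s0: (*) ↦ (x, y−α0/(x−1), z, w, t; −α0, α1, α2+α0, α3); s1: (*) ↦ (x, y−α1/x, z, w, t; α0, −α1, α2+α1, α3); s2: (*) ↦ (x+α2(w²−t)/(yw²−ty+1), y, z+2α2yw/(yw²−ty+1), w, t; α0+α2, α1+α2, −α2, α3+2α2); s3: (*) ↦ (x, y, z, w−α3/z, t; α0, α1, α2+α3, −α3); π: (*) ↦ (1−x, −y, √(−1)·z, w/√(−1), −t; α1, α0, α2, α3). Precisely: if (x(t),y(t),z(t),w(t)) is a differentiable solution of the A5^(2) system with parameters (α0,α1,α2,α3) on an open set where t ≠ 0 and the relevant denominators (x−1, x, yw²−ty+1, z respectively) do not vanish, then each transformed tuple solves the A5^(2) system with the transformed parameters (for π, the transformed functions are regarded as functions of the new time −t). These transformations generate the extended affine Weyl group of type A5^(2). -/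

import Mathlib

open Complex

noncomputable def HA5 (a0 a1 a2 a3 : ℂ) (t x y z w : ℂ) : ℂ :=
  (-(t*x*(x-1)*y^2) + (x^2 + ((a0+a1)*t - 1)*x - a1*t)*y + (a2+a3)*x - (a0*t - 1)*a1
    - z^2*w^4/4 + (a3/2)*z*w^3 + (1/4)*(2*t*z^2 - a3^2)*w^2
    - (1/2)*((a0 + a1 + 2*a2 + 2*a3)*t - 1)*z*w - t^2*z^2/4
    - x*z*w) / t^2

noncomputable def pdX (H : ℂ → ℂ → ℂ → ℂ → ℂ → ℂ) (t x y z w : ℂ) : ℂ :=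
  deriv (fun s => H t s y z w) x

noncomputable def pdY (H : ℂ → ℂ → ℂ → ℂ → ℂ → ℂ) (t x y z w : ℂ) : ℂ :=
  deriv (fun s => H t x s z w) y

noncomputable def pdZ (H : ℂ → ℂ → ℂ → ℂ → ℂ → ℂ) (t x y z w : ℂ) : ℂ :=
  deriv (fun s => H t x y s w) z

noncomputable def pdW (H : ℂ → ℂ → ℂ → ℂ → ℂ → ℂ) (t x y z w : ℂ) : ℂ :=
  deriv (fun s => H t x y z s) w

def IsSol (H : ℂ → ℂ → ℂ → ℂ → ℂ → ℂ) (U : Set ℂ) (x y z w : ℂ → ℂ) : Prop :=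
  ∀ t ∈ U,
    HasDerivAt x (pdY H t (x t) (y t) (z t) (w t)) t ∧
    HasDerivAt y (-(pdX H t (x t) (y t) (z t) (w t))) t ∧
    HasDerivAt z (pdW H t (x t) (y t) (z t) (w t)) t ∧
    HasDerivAt w (-(pdZ H t (x t) (y t) (z t) (w t))) t

/-! The partial derivatives of `HA5` are explicit polynomials over `t²`. Each transformed
component is differentiated from the original system by the chain and quotient rules, and
the resulting identity between rational functions is checked by clearing denominators:
for `s₂` after eliminating `α₃` through the parameter relation, for `π` modulo `I² = -1`. -/

theorem HasDerivAt.comp_neg {𝕜 F : Type*} [NontriviallyNormedField 𝕜] [NormedAddCommGroup F]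
    [NormedSpace 𝕜 F] {f : 𝕜 → F} {f' : F} {t : 𝕜} (h : HasDerivAt f f' t) :
    HasDerivAt (fun s => f (-s)) (-f') (-t) := by
  rw [← neg_neg t] at h
  simpa [Function.comp_def] using h.scomp (-t) (hasDerivAt_neg (-t))

section

variable {a0 a1 a2 a3 : ℂ}

theorem pdX_HA5 (t x y z w : ℂ) :
    pdX (HA5 a0 a1 a2 a3) t x y z w =
      (-(t*(2*x - 1)*y^2) + (2*x + (a0 + a1)*t - 1)*y + a2 + a3 - z*w) / t^2 := by
  unfold pdX HA5
  simp (disch := fun_prop) only [deriv_div_const, deriv_fun_sub, deriv_fun_add, deriv.fun_neg',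
    deriv_fun_mul, deriv_fun_pow, deriv_const', deriv_id'', deriv_const_mul_id']
  ring

theorem pdY_HA5 (t x y z w : ℂ) :
    pdY (HA5 a0 a1 a2 a3) t x y z w =
      (-(2*t*x*(x - 1)*y) + x^2 + ((a0 + a1)*t - 1)*x - a1*t) / t^2 := by
  unfold pdY HA5
  simp (disch := fun_prop) only [deriv_div_const, deriv_fun_sub, deriv_fun_add, deriv.fun_neg',
    deriv_fun_mul, deriv_fun_pow, deriv_const', deriv_id'', deriv_const_mul_id']
  ring

theorem pdZ_HA5 (t x y z w : ℂ) :
    pdZ (HA5 a0 a1 a2 a3) t x y z w =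
      (-(z*w^4)/2 + a3*w^3/2 + t*z*w^2 - ((a0 + a1 + 2*a2 + 2*a3)*t - 1)*w/2
        - t^2*z/2 - x*w) / t^2 := by
  unfold pdZ HA5
  simp (disch := fun_prop) only [deriv_div_const, deriv_fun_sub, deriv_fun_add, deriv.fun_neg',
    deriv_fun_mul, deriv_fun_pow, deriv_const', deriv_id'', deriv_const_mul_id']
  ring

theorem pdW_HA5 (t x y z w : ℂ) :
    pdW (HA5 a0 a1 a2 a3) t x y z w =
      (-(z^2*w^3) + 3*a3*z*w^2/2 + (2*t*z^2 - a3^2)*w/2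
        - ((a0 + a1 + 2*a2 + 2*a3)*t - 1)*z/2 - x*z) / t^2 := by
  unfold pdW HA5
  simp (disch := fun_prop) only [deriv_div_const, deriv_fun_sub, deriv_fun_add, deriv.fun_neg',
    deriv_fun_mul, deriv_fun_pow, deriv_const', deriv_id'', deriv_const_mul_id']
  ring

variable {U : Set ℂ} {x y z w : ℂ → ℂ}

theorem IsSol.backlund_s0 (hsol : IsSol (HA5 a0 a1 a2 a3) U x y z w) (hU0 : ∀ t ∈ U, t ≠ 0)
    (hx1 : ∀ t ∈ U, x t ≠ 1) :
    IsSol (HA5 (-a0) a1 (a2 + a0) a3) U x (fun t => y t - a0 / (x t - 1)) z w := by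
  intro t ht
  obtain ⟨hx, hy, hz, hw⟩ := hsol t ht
  have ht0 := hU0 t ht
  have hxt : x t - 1 ≠ 0 := sub_ne_zero.mpr (hx1 t ht)
  simp only [pdX_HA5, pdY_HA5, pdZ_HA5, pdW_HA5] at hx hy hz hw ⊢
  refine ⟨hx.congr_deriv ?_,
    (hy.sub ((hasDerivAt_const t a0).div (hx.sub_const 1) hxt)).congr_deriv ?_,
    hz.congr_deriv ?_, hw.congr_deriv ?_⟩ <;> field_simp <;> ring

theorem IsSol.backlund_s1 (hsol : IsSol (HA5 a0 a1 a2 a3) U x y z w) (hU0 : ∀ t ∈ U, t ≠ 0)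
    (hx0 : ∀ t ∈ U, x t ≠ 0) :
    IsSol (HA5 a0 (-a1) (a2 + a1) a3) U x (fun t => y t - a1 / x t) z w := by
  intro t ht
  obtain ⟨hx, hy, hz, hw⟩ := hsol t ht
  have ht0 := hU0 t ht
  have hxt := hx0 t ht
  simp only [pdX_HA5, pdY_HA5, pdZ_HA5, pdW_HA5] at hx hy hz hw ⊢
  refine ⟨hx.congr_deriv ?_, (hy.sub ((hasDerivAt_const t a1).div hx hxt)).congr_deriv ?_,
    hz.congr_deriv ?_, hw.congr_deriv ?_⟩ <;> field_simp <;> ring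

theorem IsSol.backlund_s2 (hsol : IsSol (HA5 a0 a1 a2 a3) U x y z w) (hU0 : ∀ t ∈ U, t ≠ 0)
    (hrel : a0 + a1 + 2*a2 + a3 = 1) (hD : ∀ t ∈ U, y t * (w t)^2 - t * y t + 1 ≠ 0) :
    IsSol (HA5 (a0 + a2) (a1 + a2) (-a2) (a3 + 2*a2)) U
      (fun t => x t + a2*((w t)^2 - t)/(y t * (w t)^2 - t * y t + 1)) y
      (fun t => z t + 2*a2*(y t)*(w t)/(y t * (w t)^2 - t * y t + 1)) w := by
  intro t ht
  obtain ⟨hx, hy, hz, hw⟩ := hsol t ht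
  have ht0 := hU0 t ht
  have hDt := hD t ht
  have hDt' : y t * (w t ^ 2 - t) + 1 ≠ 0 := by convert hDt using 1; ring
  obtain rfl : a3 = 1 - a0 - a1 - 2*a2 := by linear_combination hrel
  simp only [pdX_HA5, pdY_HA5, pdZ_HA5, pdW_HA5] at hx hy hz hw ⊢
  have hD' := ((hy.fun_mul (hw.fun_pow 2)).fun_sub ((hasDerivAt_id' t).fun_mul hy)).add_const 1
  have hxNum := ((hw.fun_pow 2).fun_sub (hasDerivAt_id' t)).const_mul a2
  have hzNum := (hy.const_mul (2*a2)).fun_mul hw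
  refine ⟨(hx.fun_add (hxNum.fun_div hD' hDt)).congr_deriv ?_, hy.congr_deriv ?_,
    (hz.fun_add (hzNum.fun_div hD' hDt)).congr_deriv ?_, hw.congr_deriv ?_⟩
    <;> field_simp <;> ring

theorem IsSol.backlund_s3 (hsol : IsSol (HA5 a0 a1 a2 a3) U x y z w) (hU0 : ∀ t ∈ U, t ≠ 0)
    (hz0 : ∀ t ∈ U, z t ≠ 0) :
    IsSol (HA5 a0 a1 (a2 + a3) (-a3)) U x y z (fun t => w t - a3 / z t) := by
  intro t ht
  obtain ⟨hx, hy, hz, hw⟩ := hsol t ht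
  have ht0 := hU0 t ht
  have hzt := hz0 t ht
  simp only [pdX_HA5, pdY_HA5, pdZ_HA5, pdW_HA5] at hx hy hz hw ⊢
  refine ⟨hx.congr_deriv ?_, hy.congr_deriv ?_, hz.congr_deriv ?_,
    (hw.sub ((hasDerivAt_const t a3).div hz hzt)).congr_deriv ?_⟩ <;> field_simp <;> ring

theorem IsSol.backlund_pi (hsol : IsSol (HA5 a0 a1 a2 a3) U x y z w) (hU0 : ∀ t ∈ U, t ≠ 0) :
    IsSol (HA5 a1 a0 a2 a3) ((fun t => -t) '' U)
      (fun T => 1 - x (-T)) (fun T => -(y (-T)))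
      (fun T => I * z (-T)) (fun T => w (-T) / I) := by
  rintro _ ⟨t, ht, rfl⟩
  obtain ⟨hx, hy, hz, hw⟩ := hsol t ht
  have ht0 := hU0 t ht
  simp only [pdX_HA5, pdY_HA5, pdZ_HA5, pdW_HA5, neg_neg] at hx hy hz hw ⊢
  refine ⟨(hx.comp_neg.const_sub 1).congr_deriv ?_, hy.comp_neg.neg.congr_deriv ?_,
    (hz.comp_neg.const_mul I).congr_deriv ?_, (hw.comp_neg.div_const I).congr_deriv ?_⟩
    <;> field_simp <;> ring_nf <;> simp only [I_sq, I_pow_four] <;> ring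

end

theorem backlund_A5_general (a0 a1 a2 a3 : ℂ)
    (hrel : a0 + a1 + 2*a2 + a3 = 1)
    (U : Set ℂ) (hU0 : ∀ t ∈ U, t ≠ 0)
    (x y z w : ℂ → ℂ)
    (hsol : IsSol (HA5 a0 a1 a2 a3) U x y z w) :
    -- s0
    ((∀ t ∈ U, x t ≠ 1) →
      IsSol (HA5 (-a0) a1 (a2+a0) a3) U
        x (fun t => y t - a0/(x t - 1)) z w) ∧
    -- s1
    ((∀ t ∈ U, x t ≠ 0) →
      IsSol (HA5 a0 (-a1) (a2+a1) a3) U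
        x (fun t => y t - a1/(x t)) z w) ∧
    -- s2
    ((∀ t ∈ U, y t * (w t)^2 - t * y t + 1 ≠ 0) →
      IsSol (HA5 (a0+a2) (a1+a2) (-a2) (a3+2*a2)) U
        (fun t => x t + a2*((w t)^2 - t)/(y t * (w t)^2 - t * y t + 1)) y
        (fun t => z t + 2*a2*(y t)*(w t)/(y t * (w t)^2 - t * y t + 1)) w) ∧
    -- s3
    ((∀ t ∈ U, z t ≠ 0) →
      IsSol (HA5 a0 a1 (a2+a3) (-a3)) U
        x y z (fun t => w t - a3/(z t))) ∧
    -- π : the transformed functions are functions of the new time T = −t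
    IsSol (HA5 a1 a0 a2 a3) ((fun t => -t) '' U)
      (fun T => 1 - x (-T)) (fun T => -(y (-T)))
      (fun T => I * z (-T)) (fun T => w (-T) / I) :=
  ⟨hsol.backlund_s0 hU0, hsol.backlund_s1 hU0, hsol.backlund_s2 hU0 hrel,
    hsol.backlund_s3 hU0, hsol.backlund_pi hU0⟩

theorem backlund_A5 (a0 a1 a2 a3 : ℂ)
    (hrel : a0 + a1 + 2*a2 + a3 = 1)
    (U : Set ℂ) (hU : IsOpen U) (hU0 : ∀ t ∈ U, t ≠ 0)
    (x y z w : ℂ → ℂ)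
    (hsol : IsSol (HA5 a0 a1 a2 a3) U x y z w) :
    -- s0
    ((∀ t ∈ U, x t ≠ 1) →
      IsSol (HA5 (-a0) a1 (a2+a0) a3) U
        x (fun t => y t - a0/(x t - 1)) z w) ∧
    -- s1
    ((∀ t ∈ U, x t ≠ 0) →
      IsSol (HA5 a0 (-a1) (a2+a1) a3) U
        x (fun t => y t - a1/(x t)) z w) ∧
    -- s2
    ((∀ t ∈ U, y t * (w t)^2 - t * y t + 1 ≠ 0) →
      IsSol (HA5 (a0+a2) (a1+a2) (-a2) (a3+2*a2)) U
        (fun t => x t + a2*((w t)^2 - t)/(y t * (w t)^2 - t * y t + 1)) y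
        (fun t => z t + 2*a2*(y t)*(w t)/(y t * (w t)^2 - t * y t + 1)) w) ∧
    -- s3
    ((∀ t ∈ U, z t ≠ 0) →
      IsSol (HA5 a0 a1 (a2+a3) (-a3)) U
        x y z (fun t => w t - a3/(z t))) ∧
    -- π : the transformed functions are functions of the new time T = −t
    IsSol (HA5 a1 a0 a2 a3) ((fun t => -t) '' U)
      (fun T => 1 - x (-T)) (fun T => -(y (-T)))
      (fun T => I * z (-T)) (fun T => w (-T) / I) :=
  backlund_A5_general a0 a1 a2 a3 hrel U hU0 x y z w hsol
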